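/- arXiv:1311.2191 — 2 statements merged into one kernel-verified Lean document; each statement's English description precedes it below -/
import Mathlib

section
/- If u(x) = u_*(t) for some t ∈ [0,|Ω|] (i.e., x lies in the level set L_t(u)), then NF^h u(x) = (1/c(t)) ∫_0^{|Ω|} K_h(u_*(t)−u_*(s)) u_*(s) ds, where c(t) = ∫_0^{|Ω|} K_h(u_*(t)−u_*(s)) ds. That is, the Neighborhood filter can be computed on the one-dimensional decreasing rearrangement. -/
open MeasureTheory

open Set in
/-- Equimeasurability: integrating a Borel function of `u` over `Ω` is the same as
integrating it against the decreasing rearrangement over `(0, |Ω|)`. -/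
theorem rearr_aux
    {d : ℕ} (Ω : Set (Fin d → ℝ)) (hΩm : MeasurableSet Ω)
    (hΩfin : volume Ω ≠ ⊤)
    (u : (Fin d → ℝ) → ℝ) (hu : Measurable u) (hupos : ∀ x, 0 ≤ u x)
    (M : ℝ) (hM : ∀ x ∈ Ω, |u x| ≤ M)
    (f : ℝ → ℝ) (hf : Measurable f) :
    ∫ y in Ω, f (u y) = ∫ s in Set.Ioo (0 : ℝ) (volume Ω).toReal,
      f (sInf {q : ℝ | (volume (Ω ∩ {x | q < u x})).toReal ≤ max s 0}) := by
  set T : ℝ := (volume Ω).toReal with hT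
  set μf : ℝ → ℝ := fun q => (volume (Ω ∩ {x | q < u x})).toReal with hμf
  set ψ : ℝ → ℝ := fun s => sInf {q : ℝ | μf q ≤ max s 0} with hψ
  have hsub : ∀ q : ℝ, Ω ∩ {x | q < u x} ⊆ Ω := fun q => inter_subset_left
  have hfin : ∀ q : ℝ, volume (Ω ∩ {x | q < u x}) ≠ ⊤ :=
    fun q => (lt_of_le_of_lt (measure_mono (hsub q)) (lt_top_iff_ne_top.2 hΩfin)).ne
  have hμT : ∀ q, μf q ≤ T := fun q => ENNReal.toReal_mono hΩfin (measure_mono (hsub q))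
  have hμ0 : ∀ q, 0 ≤ μf q := fun q => ENNReal.toReal_nonneg
  have hanti : Antitone μf := by
    intro a b hab
    exact ENNReal.toReal_mono (hfin a)
      (measure_mono (inter_subset_inter_right _ (fun y hy => lt_of_le_of_lt hab hy)))
  have hμM : μf M = 0 := by
    have hempty : Ω ∩ {x | M < u x} = ∅ := by
      ext y
      simp only [mem_inter_iff, mem_setOf_eq, mem_empty_iff_false, iff_false, not_and]
      intro hyΩ hyM
      exact absurd (le_trans (le_abs_self _) (hM y hyΩ)) (not_le.2 hyM)
    simp [hμf, hempty]
  have hAne : ∀ s : ℝ, 0 ≤ s → M ∈ {q : ℝ | μf q ≤ s} := fun s hs => by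
    simpa [hμM] using hs
  have hμneg : ∀ q : ℝ, q < 0 → μf q = T := by
    intro q hq
    have : Ω ∩ {x | q < u x} = Ω :=
      Set.inter_eq_self_of_subset_left (fun y hy => lt_of_lt_of_le hq (hupos y))
    simp [hμf, this, hT]
  have hbdd : ∀ s : ℝ, s < T → BddBelow {q : ℝ | μf q ≤ s} := by
    intro s hs
    refine ⟨0, fun q hq => ?_⟩
    by_contra hq0
    push_neg at hq0
    rw [mem_setOf_eq, hμneg q hq0] at hq
    exact absurd hq (not_le.2 hs)
  -- key: μf (ψ s) ≤ s on [0, T)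
  have hkey : ∀ s : ℝ, 0 ≤ s → s < T → μf (ψ s) ≤ s := by
    intro s hs0 hsT
    have hmax : max s 0 = s := max_eq_left hs0
    have hψs : ψ s = sInf {q : ℝ | μf q ≤ s} := by rw [hψ]; simp [hmax]
    have hAne' : Set.Nonempty {q : ℝ | μf q ≤ s} := ⟨M, hAne s hs0⟩
    have hsubU : Ω ∩ {x | ψ s < u x} ⊆
        ⋃ r : {r : ℚ // μf (r : ℝ) ≤ s}, (Ω ∩ {x | (r : ℝ) < u x}) := by
      rintro y ⟨hyΩ, hy⟩
      rw [mem_setOf_eq, hψs] at hy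
      obtain ⟨q, hqA, hq⟩ := exists_lt_of_csInf_lt hAne' hy
      obtain ⟨r, hr1, hr2⟩ := exists_rat_btwn hq
      have hrA : μf (r : ℝ) ≤ s := le_trans (hanti hr1.le) hqA
      exact Set.mem_iUnion.2 ⟨⟨r, hrA⟩, hyΩ, hr2⟩
    have hdir : Directed (· ⊆ ·)
        (fun r : {r : ℚ // μf (r : ℝ) ≤ s} => Ω ∩ {x | (r : ℝ) < u x}) := by
      rintro ⟨r1, h1⟩ ⟨r2, h2⟩
      refine ⟨⟨min r1 r2, ?_⟩, ?_, ?_⟩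
      · rcases le_total r1 r2 with hle | hle
        · rw [min_eq_left hle]; exact h1
        · rw [min_eq_right hle]; exact h2
      · refine Set.inter_subset_inter_right _ (fun y hy => ?_)
        simp only [Set.mem_setOf_eq] at hy ⊢
        exact lt_of_le_of_lt (by exact_mod_cast min_le_left r1 r2) hy
      · refine Set.inter_subset_inter_right _ (fun y hy => ?_)
        simp only [Set.mem_setOf_eq] at hy ⊢
        exact lt_of_le_of_lt (by exact_mod_cast min_le_right r1 r2) hy
    have hle : volume (Ω ∩ {x | ψ s < u x}) ≤ ENNReal.ofReal s := by
      refine le_trans (measure_mono hsubU) ?_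
      rw [hdir.measure_iUnion]
      refine iSup_le fun r => ?_
      rw [ENNReal.le_ofReal_iff_toReal_le (hfin _) hs0]
      exact r.2
    exact ENNReal.toReal_le_of_le_ofReal hs0 hle
  have hiff : ∀ s : ℝ, 0 < s → s < T → ∀ q : ℝ, (ψ s ≤ q ↔ μf q ≤ s) := by
    intro s hs0 hsT q
    constructor
    · intro hq
      exact le_trans (hanti hq) (hkey s hs0.le hsT)
    · intro hq
      have hψs : ψ s = sInf {q : ℝ | μf q ≤ s} := by
        rw [hψ]; simp [max_eq_left hs0.le]
      rw [hψs]
      exact csInf_le (hbdd s hsT) hq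
  have hpos : ∀ s' : ℝ, s' < T → 0 ≤ sInf {q : ℝ | μf q ≤ s'} := by
    intro s' hs'
    rcases le_or_gt 0 s' with h0 | h0
    · refine le_csInf ⟨M, hAne s' h0⟩ (fun q hq => ?_)
      by_contra hq0
      push_neg at hq0
      rw [mem_setOf_eq, hμneg q hq0] at hq
      linarith
    · have hempty : {q : ℝ | μf q ≤ s'} = ∅ :=
        Set.eq_empty_iff_forall_notMem.2
          (fun q hq => absurd (le_trans (hμ0 q) hq) (not_le.2 h0))
      simp [hempty, Real.sInf_empty]
  have hnotbdd : ∀ s' : ℝ, T ≤ s' → sInf {q : ℝ | μf q ≤ s'} = 0 := by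
    intro s' hs'
    apply Real.sInf_of_not_bddBelow
    rintro ⟨c, hc⟩
    have h1 : (min c 0 - 1) ∈ {q : ℝ | μf q ≤ s'} := by
      rw [mem_setOf_eq, hμneg _ (by linarith [min_le_right c 0])]
      exact hs'
    have h2 := hc h1
    have h3 := min_le_left c 0
    linarith
  have hψanti : Antitone ψ := by
    intro a b hab
    have hab' : max a 0 ≤ max b 0 := max_le_max hab le_rfl
    show sInf {q : ℝ | μf q ≤ max b 0} ≤ sInf {q : ℝ | μf q ≤ max a 0}
    rcases lt_or_ge (max b 0) T with hbT | hbT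
    · exact csInf_le_csInf (hbdd _ hbT) ⟨M, hAne _ (le_max_right _ _)⟩
        (fun q hq => le_trans hq hab')
    · rw [hnotbdd _ hbT]
      rcases lt_or_ge (max a 0) T with haT | haT
      · exact hpos _ haT
      · rw [hnotbdd _ haT]
  have hψm : Measurable ψ := hψanti.measurable
  set ν₁ : Measure ℝ := Measure.map u (volume.restrict Ω) with hν₁
  set ν₂ : Measure ℝ := Measure.map ψ (volume.restrict (Set.Ioo 0 T)) with hν₂
  have hν₁Ioi : ∀ q : ℝ, ν₁ (Set.Ioi q) = volume (Ω ∩ {x | q < u x}) := by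
    intro q
    rw [hν₁, Measure.map_apply hu measurableSet_Ioi,
      Measure.restrict_apply (hu measurableSet_Ioi), Set.inter_comm]
    rfl
  have hν₂Ioi : ∀ q : ℝ, ν₂ (Set.Ioi q) = volume (Ω ∩ {x | q < u x}) := by
    intro q
    rw [hν₂, Measure.map_apply hψm measurableSet_Ioi,
      Measure.restrict_apply (hψm measurableSet_Ioi)]
    have heq : ψ ⁻¹' Set.Ioi q ∩ Set.Ioo 0 T = Set.Ioo 0 (μf q) := by
      ext s
      simp only [mem_inter_iff, mem_preimage, mem_Ioi, mem_Ioo]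
      constructor
      · rintro ⟨hq, hs0, hsT⟩
        refine ⟨hs0, ?_⟩
        by_contra hc
        push_neg at hc
        exact absurd ((hiff s hs0 hsT q).2 hc) (not_le.2 hq)
      · rintro ⟨hs0, hsμ⟩
        have hsT : s < T := lt_of_lt_of_le hsμ (hμT q)
        refine ⟨?_, hs0, hsT⟩
        by_contra hc
        push_neg at hc
        exact absurd ((hiff s hs0 hsT q).1 hc) (not_le.2 hsμ)
    rw [heq, Real.volume_Ioo, sub_zero]
    exact ENNReal.ofReal_toReal (hfin q)
  have htot : ν₁ Set.univ = ν₂ Set.univ := by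
    rw [hν₁, hν₂, Measure.map_apply hu MeasurableSet.univ,
      Measure.map_apply hψm MeasurableSet.univ]
    simp only [Set.preimage_univ, Measure.restrict_apply_univ, Real.volume_Ioo, sub_zero]
    exact (ENNReal.ofReal_toReal hΩfin).symm
  have hν₁fin : IsFiniteMeasure ν₁ := by
    constructor
    rw [hν₁, Measure.map_apply hu MeasurableSet.univ, Set.preimage_univ,
      Measure.restrict_apply_univ]
    exact lt_top_iff_ne_top.2 hΩfin
  have hνeq : ν₁ = ν₂ := by
    refine Measure.ext_of_Iic ν₁ ν₂ (fun q => ?_)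
    rw [← Set.compl_Ioi, measure_compl measurableSet_Ioi (by rw [hν₁Ioi]; exact hfin q),
      measure_compl measurableSet_Ioi (by rw [hν₂Ioi]; exact hfin q),
      htot, hν₁Ioi, hν₂Ioi]
  calc ∫ y in Ω, f (u y) = ∫ v, f v ∂ν₁ :=
        (integral_map hu.aemeasurable hf.aestronglyMeasurable).symm
    _ = ∫ v, f v ∂ν₂ := by rw [hνeq]
    _ = ∫ s in Set.Ioo (0 : ℝ) T, f (ψ s) :=
        integral_map hψm.aemeasurable hf.aestronglyMeasurable

/-- The Neighborhood filter can be computed on the one-dimensional decreasing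
rearrangement: if `u x = u_* t` for some `t ∈ [0, |Ω|]`, then
`NF^h u (x) = (1/c(t)) ∫_0^{|Ω|} K_h(u_* t − u_* s) u_* s ds`. -/
theorem NF_eq_on_rearrangement
    {d : ℕ} (Ω : Set (Fin d → ℝ)) (hΩm : MeasurableSet Ω)
    (hΩb : Bornology.IsBounded Ω) (hΩo : IsOpen Ω)
    (u : (Fin d → ℝ) → ℝ) (hu : Measurable u) (hupos : ∀ x, 0 ≤ u x)
    (hbdd : ∃ M : ℝ, ∀ x ∈ Ω, |u x| ≤ M)
    (K : ℝ → ℝ) (hKmeas : Measurable K) (hK0 : ∀ ξ, 0 ≤ K ξ)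
    (hKpos : ∃ ε > 0, ∀ ξ : ℝ, |ξ| < ε → 0 < K ξ)
    (h : ℝ) (hh : 0 < h)
    (ustar : ℝ → ℝ)
    (hustar : ∀ s ∈ Set.Icc (0 : ℝ) (volume Ω).toReal,
      ustar s = sInf {q : ℝ | (volume (Ω ∩ {x | q < u x})).toReal ≤ s})
    (x : Fin d → ℝ) (hx : x ∈ Ω)
    (t : ℝ) (ht : t ∈ Set.Icc (0 : ℝ) (volume Ω).toReal)
    (hxt : u x = ustar t) :
    (∫ y in Ω, K ((u x - u y) / h) * u y) / (∫ y in Ω, K ((u x - u y) / h)) =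
      (∫ s in Set.Ioo (0 : ℝ) (volume Ω).toReal,
          K ((ustar t - ustar s) / h) * ustar s) /
        (∫ s in Set.Ioo (0 : ℝ) (volume Ω).toReal,
          K ((ustar t - ustar s) / h)) := by
  obtain ⟨M, hM⟩ := hbdd
  have hΩfin : volume Ω ≠ ⊤ := hΩb.measure_lt_top.ne
  have key : ∀ f : ℝ → ℝ, Measurable f →
      ∫ y in Ω, f (u y) = ∫ s in Set.Ioo (0 : ℝ) (volume Ω).toReal, f (ustar s) := by
    intro f hf
    rw [rearr_aux Ω hΩm hΩfin u hu hupos M hM f hf]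
    refine setIntegral_congr_fun measurableSet_Ioo (fun s hs => ?_)
    have h1 : max s 0 = s := max_eq_left hs.1.le
    rw [h1, ← hustar s ⟨hs.1.le, hs.2.le⟩]
  have hf1 : Measurable fun v : ℝ => K ((ustar t - v) / h) * v :=
    (hKmeas.comp ((measurable_const.sub measurable_id).div_const h)).mul measurable_id
  have hf2 : Measurable fun v : ℝ => K ((ustar t - v) / h) :=
    hKmeas.comp ((measurable_const.sub measurable_id).div_const h)
  have h1 : (∫ y in Ω, K ((ustar t - u y) / h) * u y) =
      ∫ s in Set.Ioo (0 : ℝ) (volume Ω).toReal, K ((ustar t - ustar s) / h) * ustar s :=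
    key (fun v => K ((ustar t - v) / h) * v) hf1
  have h2 : (∫ y in Ω, K ((ustar t - u y) / h)) =
      ∫ s in Set.Ioo (0 : ℝ) (volume Ω).toReal, K ((ustar t - ustar s) / h) :=
    key (fun v => K ((ustar t - v) / h)) hf2
  rw [hxt, h1, h2]
end

section
/- If a symmetric kernel K : ℝ → [0,∞) satisfies R₁ = (ξ₁−ξ₂)(K'(ξ−ξ₁)K(ξ−ξ₂) − K'(ξ−ξ₂)K(ξ−ξ₁)) ≥ 0 for all ξ, ξ₁, ξ₂ ∈ ℝ, then K is decaying: |ξ₁| ≥ |ξ₂| implies K(ξ₂) ≥ K(ξ₁). -/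
/-!
Taking `ξ = 0`, `ξ₁ = b`, `ξ₂ = -b` in `R₁ ≥ 0` and using that `K'` is odd gives
`-4 b K(b) K'(b) ≥ 0`, i.e. `(K²)' ≤ 0` on `(0, ∞)`. Hence `K²`, and with it `K ≥ 0`,
is antitone on `[0, ∞)`, and evenness turns this into the comparison of `|ξ₁|` and `|ξ₂|`.
-/

open Set

theorem Function.Even.deriv_neg {𝕜 F : Type*} [NontriviallyNormedField 𝕜]
    [NormedAddCommGroup F] [NormedSpace 𝕜 F] {f : 𝕜 → F} (hf : f.Even) (x : 𝕜) :
    deriv f (-x) = -deriv f x := by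
  have h := deriv_comp_neg f x
  rw [show (fun y => f (-y)) = f from funext hf] at h
  rw [h, neg_neg]

theorem Function.Even.le_of_abs_le {β : Type*} [Preorder β] {f : ℝ → β} (hf : f.Even)
    (hanti : AntitoneOn f (Ici 0)) {x y : ℝ} (hxy : |y| ≤ |x|) : f x ≤ f y := by
  have hf_abs : ∀ z, f |z| = f z := fun z => by
    rcases abs_choice z with h | h <;> rw [h]
    exact hf z
  rw [← hf_abs x, ← hf_abs y]
  exact hanti (abs_nonneg y) (abs_nonneg x) hxy

theorem AntitoneOn.of_mul_self {α R : Type*} [Preorder α] [Semiring R] [LinearOrder R]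
    [PosMulStrictMono R] [MulPosMono R] {f : α → R} {s : Set α} (hf : ∀ x ∈ s, 0 ≤ f x)
    (h : AntitoneOn (fun x => f x * f x) s) : AntitoneOn f s :=
  fun _ hx _ hy hxy => nonneg_le_nonneg_of_sq_le_sq (hf _ hx) (h hx hy hxy)

theorem antitoneOn_mul_self_Ici_of_mul_deriv_nonpos {f : ℝ → ℝ} (hf : Differentiable ℝ f)
    (h : ∀ x, 0 < x → f x * deriv f x ≤ 0) : AntitoneOn (fun x => f x * f x) (Ici 0) := by
  refine antitoneOn_of_deriv_nonpos (convex_Ici 0) (hf.mul hf).continuous.continuousOn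
    (hf.mul hf).differentiableOn fun x hx => ?_
  rw [interior_Ici] at hx
  rw [deriv_fun_mul (hf x) (hf x)]
  linarith [h x hx]

theorem mul_deriv_nonpos_of_R1_nonneg {K : ℝ → ℝ} (hKeven : K.Even)
    (hR1 : ∀ ξ ξ₁ ξ₂ : ℝ,
      0 ≤ (ξ₁ - ξ₂) * (deriv K (ξ - ξ₁) * K (ξ - ξ₂) - deriv K (ξ - ξ₂) * K (ξ - ξ₁)))
    {b : ℝ} (hb : 0 < b) : K b * deriv K b ≤ 0 := by
  have h := hR1 0 b (-b)
  simp only [zero_sub, zero_add, sub_neg_eq_add] at h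
  rw [hKeven.deriv_neg, hKeven b] at h
  nlinarith

/-- If a symmetric `C¹` kernel `K ≥ 0` satisfies
`R₁ = (ξ₁−ξ₂)(K'(ξ−ξ₁)K(ξ−ξ₂) − K'(ξ−ξ₂)K(ξ−ξ₁)) ≥ 0` for all `ξ, ξ₁, ξ₂`,
then `K` is decaying: `|ξ₁| ≥ |ξ₂|` implies `K ξ₂ ≥ K ξ₁`. -/
theorem symmetric_R1_kernel_decaying (K : ℝ → ℝ)
    (hKC1 : ContDiff ℝ 1 K) (hK0 : ∀ ξ, 0 ≤ K ξ)
    (hKeven : ∀ ξ, K (-ξ) = K ξ)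
    (hR1 : ∀ ξ ξ₁ ξ₂ : ℝ,
      0 ≤ (ξ₁ - ξ₂) * (deriv K (ξ - ξ₁) * K (ξ - ξ₂) -
        deriv K (ξ - ξ₂) * K (ξ - ξ₁))) :
    ∀ ξ₁ ξ₂ : ℝ, |ξ₂| ≤ |ξ₁| → K ξ₁ ≤ K ξ₂ := by
  have hK_anti : AntitoneOn K (Ici 0) :=
    .of_mul_self (fun ξ _ => hK0 ξ) <|
      antitoneOn_mul_self_Ici_of_mul_deriv_nonpos (hKC1.differentiable one_ne_zero)
        fun _ hb => mul_deriv_nonpos_of_R1_nonneg hKeven hR1 hb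
  exact fun _ _ h => Function.Even.le_of_abs_le hKeven hK_anti h
end
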